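/- Let d ≥ 4 be even. Let γ₁, γ₂ be fixed-point-free involutions of Fin d and let α be a permutation of Fin d satisfying the relation α² · γ₁ · γ₂ = 1. If the subgroup G = ⟨α, γ₁, γ₂⟩ of the symmetric group acts transitively on Fin d, then G is imprimitive: there exists a block Λ of G with 1 < |Λ| < d. -/

import Mathlib

/-! If `α² ≠ 1`, the cyclic group `⟨α²⟩ = ⟨γ₂γ₁⟩` is normalised by the generators (`α`
centralises it, each `γᵢ` inverts it), so its orbits are blocks. Such an orbit is not all of
`Fin d`, since `α²` is an even permutation while a `d`-cycle is odd for even `d`.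
If `α² = 1`, then `γ₁ = γ₂` and `G = ⟨α, γ₁⟩` is dihedral; the orbits of the rotation `(αγ₁)²`
work in the same way, unless `(αγ₁)² = 1`, in which case `γ₁` is central and its orbits, of
size `2 < d`, are blocks. -/

open Equiv Equiv.Perm Subgroup MulAction

namespace Subgroup

variable {G : Type*} [Group G]

theorem mem_normalizer_zpowers_iff {s g : G} :
    s ∈ normalizer (zpowers g) ↔ zpowers (s * g * s⁻¹) = zpowers g := by
  rw [mem_normalizer_iff_map_conj_eq, MonoidHom.map_zpowers]
  rfl

theorem mem_normalizer_zpowers_of_commute {s g : G} (h : Commute s g) :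
    s ∈ normalizer (zpowers g) := by
  rw [mem_normalizer_zpowers_iff, h.eq, mul_inv_cancel_right]

variable {a b : G}

theorem commute_of_mul_self_eq_one (ha : a * a = 1) (hb : b * b = 1) (hab : (a * b) ^ 2 = 1) :
    Commute a b := by
  have h := eq_inv_of_mul_eq_one_left (sq (a * b) ▸ hab)
  rwa [mul_inv_rev, inv_eq_of_mul_eq_one_right ha, inv_eq_of_mul_eq_one_right hb] at h

theorem left_mem_normalizer_zpowers_mul_pow (ha : a * a = 1) (hb : b * b = 1) (n : ℕ) :
    a ∈ normalizer (zpowers ((a * b) ^ n)) := by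
  have hconj : a * (a * b) * a⁻¹ = (a * b)⁻¹ := by
    rw [inv_eq_of_mul_eq_one_right ha, mul_inv_rev, inv_eq_of_mul_eq_one_right ha,
      inv_eq_of_mul_eq_one_right hb, ← mul_assoc, ha, one_mul]
  rw [mem_normalizer_zpowers_iff, ← conj_pow, hconj, inv_pow, zpowers_inv]

theorem right_mem_normalizer_zpowers_mul_pow (ha : a * a = 1) (hb : b * b = 1) (n : ℕ) :
    b ∈ normalizer (zpowers ((a * b) ^ n)) := by
  have hconj : b * (a * b) * b⁻¹ = (a * b)⁻¹ := by
    rw [inv_eq_of_mul_eq_one_right hb, mul_inv_rev, inv_eq_of_mul_eq_one_right ha,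
      inv_eq_of_mul_eq_one_right hb, mul_assoc, mul_assoc, hb, mul_one]
  rw [mem_normalizer_zpowers_iff, ← conj_pow, hconj, inv_pow, zpowers_inv]

theorem closure_pair_le_normalizer_zpowers_mul_pow (ha : a * a = 1) (hb : b * b = 1) (n : ℕ) :
    closure {a, b} ≤ normalizer (zpowers ((a * b) ^ n)) := by
  rw [closure_le, Set.insert_subset_iff, Set.singleton_subset_iff]
  exact ⟨left_mem_normalizer_zpowers_mul_pow ha hb n,
    right_mem_normalizer_zpowers_mul_pow ha hb n⟩

theorem closure_insert_pair_le_normalizer_zpowers_mul_pow {c : G} (ha : a * a = 1)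
    (hb : b * b = 1) {n : ℕ} (hc : Commute c ((a * b) ^ n)) :
    closure {c, a, b} ≤ normalizer (zpowers ((a * b) ^ n)) := by
  rw [closure_le, Set.insert_subset_iff, Set.insert_subset_iff, Set.singleton_subset_iff]
  exact ⟨mem_normalizer_zpowers_of_commute hc, left_mem_normalizer_zpowers_mul_pow ha hb n,
    right_mem_normalizer_zpowers_mul_pow ha hb n⟩

end Subgroup

namespace Equiv.Perm

variable {X : Type*} {σ h : Perm X} {x y : X}

theorem sign_sq [Fintype X] [DecidableEq X] (τ : Perm X) : sign (τ ^ 2) = 1 := by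
  rw [map_pow, Int.units_sq]

theorem SameCycle.apply_of_mem_normalizer (hh : h ∈ normalizer (zpowers σ))
    (hxy : σ.SameCycle x y) : σ.SameCycle (h x) (h y) := by
  obtain ⟨i, rfl⟩ := hxy
  obtain ⟨j, hj⟩ :=
    mem_zpowers_iff.1 ((mem_normalizer_iff.1 hh _).1 (zpow_mem (mem_zpowers σ) i))
  exact ⟨j, by rw [hj]; simp⟩

theorem isBlock_setOf_sameCycle {H : Subgroup (Perm X)} (hH : H ≤ normalizer (zpowers σ))
    (x : X) : IsBlock H {y | σ.SameCycle x y} := by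
  rw [isBlock_iff_smul_eq_of_mem]
  rintro ⟨h, hh⟩ a (hxa : σ.SameCycle x a) (hxha : σ.SameCycle x (h a))
  have hN : h ∈ normalizer (zpowers σ) := hH hh
  have hxhx : σ.SameCycle x (h x) := hxha.trans (hxa.apply_of_mem_normalizer hN).symm
  ext y
  rw [Set.mem_smul_set_iff_inv_smul_mem]
  change σ.SameCycle x (h⁻¹ y) ↔ σ.SameCycle x y
  constructor
  · intro hy
    simpa using hxhx.trans (hy.apply_of_mem_normalizer hN)
  · intro hy
    simpa using (hxhx.symm.trans hy).apply_of_mem_normalizer (inv_mem hN)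

theorem one_lt_ncard_setOf_sameCycle [Finite X] (hx : σ x ≠ x) :
    1 < {y | σ.SameCycle x y}.ncard :=
  (Set.one_lt_ncard (Set.toFinite _)).2
    ⟨x, SameCycle.refl _ _, σ x, (SameCycle.refl _ _).apply_right, hx.symm⟩

theorem ncard_setOf_sameCycle_le_two [Finite X] (hσ : σ * σ = 1) :
    {y | σ.SameCycle x y}.ncard ≤ 2 := by
  have hord : orderOf σ ≤ 2 := orderOf_le_of_pow_eq_one two_pos (by rw [sq, hσ])
  have hsub : {y | σ.SameCycle x y} ⊆ {x, σ x} := by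
    rintro y hy
    obtain ⟨i, hi, rfl⟩ := SameCycle.exists_pow_eq' hy
    have hi2 : i < 2 := hi.trans_le hord
    interval_cases i <;> simp
  exact (Set.ncard_le_ncard hsub).trans ((Set.ncard_insert_le _ _).trans (by simp))

theorem ncard_setOf_sameCycle_lt_of_sign_eq_one [Fintype X] [DecidableEq X]
    (hX : Even (Nat.card X)) (hσ : sign σ = 1) (hx : σ x ≠ x) :
    {y | σ.SameCycle x y}.ncard < Nat.card X := by
  by_contra! hle
  have hall : ∀ y, σ.SameCycle x y := Set.eq_univ_iff_forall.1 <|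
    Set.eq_of_subset_of_ncard_le (Set.subset_univ _) ((Set.ncard_univ X).trans_le hle)
  have hsupp : σ.support = Finset.univ := Finset.eq_univ_of_forall fun y ↦
    mem_support.2 fun hy ↦ hx ((hall y).apply_eq_self_iff.2 hy)
  have hsign := (IsCycle.sign ⟨x, hx, fun y _ ↦ hall y⟩ : sign σ = _)
  rw [hσ, hsupp, Finset.card_univ, ← Nat.card_eq_fintype_card, hX.neg_one_pow] at hsign
  exact absurd hsign (by decide)

variable {H : Subgroup (Perm X)}

theorem exists_isBlock_of_le_normalizer_zpowers [Finite X] (hH : H ≤ normalizer (zpowers σ))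
    (hx : σ x ≠ x) (hlt : {y | σ.SameCycle x y}.ncard < Nat.card X) :
    ∃ B : Set X, IsBlock H B ∧ 1 < B.ncard ∧ B.ncard < Nat.card X :=
  ⟨_, isBlock_setOf_sameCycle hH x, one_lt_ncard_setOf_sameCycle hx, hlt⟩

theorem exists_isBlock_of_mul_self_eq_one [Finite X] (hX : 2 < Nat.card X)
    (hH : H ≤ normalizer (zpowers σ)) (hσ : σ * σ = 1) (hx : σ x ≠ x) :
    ∃ B : Set X, IsBlock H B ∧ 1 < B.ncard ∧ B.ncard < Nat.card X :=
  exists_isBlock_of_le_normalizer_zpowers hH hx ((ncard_setOf_sameCycle_le_two hσ).trans_lt hX)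

theorem exists_isBlock_of_sign_eq_one [Fintype X] [DecidableEq X] (hX : Even (Nat.card X))
    (hH : H ≤ normalizer (zpowers σ)) (hσ : sign σ = 1) (hσ1 : σ ≠ 1) :
    ∃ B : Set X, IsBlock H B ∧ 1 < B.ncard ∧ B.ncard < Nat.card X := by
  obtain ⟨x, hx⟩ := not_forall.1 (mt Perm.ext hσ1)
  exact exists_isBlock_of_le_normalizer_zpowers hH hx
    (ncard_setOf_sameCycle_lt_of_sign_eq_one hX hσ hx)

end Equiv.Perm

theorem hurwitz_group_two_branch_points_all_twos_imprimitive_general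
    (d : ℕ) (hd : 4 ≤ d) (hdeven : Even d)
    (γ₁ γ₂ α : Equiv.Perm (Fin d))
    (hγ₁ : γ₁ * γ₁ = 1) (hγ₁' : ∀ x : Fin d, γ₁ x ≠ x)
    (hγ₂ : γ₂ * γ₂ = 1)
    (hrel : α ^ 2 * γ₁ * γ₂ = 1) :
    ∃ Λ : Set (Fin d),
      MulAction.IsBlock (Subgroup.closure {α, γ₁, γ₂}) Λ ∧ 1 < Λ.ncard ∧ Λ.ncard < d := by
  suffices ∃ Λ : Set (Fin d), IsBlock (closure {α, γ₁, γ₂}) Λ ∧ 1 < Λ.ncard ∧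
      Λ.ncard < Nat.card (Fin d) by simpa using this
  replace hdeven : Even (Nat.card (Fin d)) := by simpa using hdeven
  have hα : α ^ 2 = γ₂ * γ₁ := by
    rw [eq_inv_of_mul_eq_one_left ((mul_assoc _ _ _).symm.trans hrel), mul_inv_rev,
      inv_eq_of_mul_eq_one_right hγ₁, inv_eq_of_mul_eq_one_right hγ₂]
  by_cases hα1 : α ^ 2 = 1
  · have hαα : α * α = 1 := by rw [← sq, hα1]
    obtain rfl : γ₁ = γ₂ := by
      rw [hα1] at hα
      rw [eq_inv_of_mul_eq_one_right hα.symm, inv_eq_of_mul_eq_one_right hγ₂]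
    rw [Set.pair_eq_singleton]
    by_cases hαγ : (α * γ₁) ^ 2 = 1
    · have hG : closure {α, γ₁} ≤ normalizer (zpowers γ₁) := by
        rw [closure_le, Set.insert_subset_iff, Set.singleton_subset_iff]
        exact ⟨mem_normalizer_zpowers_of_commute (commute_of_mul_self_eq_one hαα hγ₁ hαγ),
          mem_normalizer_zpowers_of_commute (Commute.refl γ₁)⟩
      exact exists_isBlock_of_mul_self_eq_one (by simp only [Nat.card_fin]; omega) hG hγ₁
        (hγ₁' ⟨0, by omega⟩)
    · exact exists_isBlock_of_sign_eq_one hdeven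
        (closure_pair_le_normalizer_zpowers_mul_pow hαα hγ₁ 2) (sign_sq _) hαγ
  · have hG := closure_insert_pair_le_normalizer_zpowers_mul_pow (c := α) (n := 1) hγ₂ hγ₁
      (by rw [pow_one, ← hα]; exact Commute.self_pow α 2)
    rw [pow_one, ← hα, Set.pair_comm] at hG
    exact exists_isBlock_of_sign_eq_one hdeven hG (sign_sq α) hα1

/-- If `γ₁, γ₂` are fixed-point-free involutions of `Fin d` (`d ≥ 4` even) and `α` satisfies
`α² γ₁ γ₂ = 1`, then the subgroup generated by `α, γ₁, γ₂`, if transitive, is imprimitive: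
it has a nontrivial block. -/
theorem hurwitz_group_two_branch_points_all_twos_imprimitive
    (d : ℕ) (hd : 4 ≤ d) (hdeven : Even d)
    (γ₁ γ₂ α : Equiv.Perm (Fin d))
    (hγ₁ : γ₁ * γ₁ = 1) (hγ₁' : ∀ x : Fin d, γ₁ x ≠ x)
    (hγ₂ : γ₂ * γ₂ = 1) (hγ₂' : ∀ x : Fin d, γ₂ x ≠ x)
    (hrel : α ^ 2 * γ₁ * γ₂ = 1)
    (htrans : MulAction.IsPretransitive (Subgroup.closure {α, γ₁, γ₂}) (Fin d)) :
    ∃ Λ : Set (Fin d),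
      MulAction.IsBlock (Subgroup.closure {α, γ₁, γ₂}) Λ ∧ 1 < Λ.ncard ∧ Λ.ncard < d :=
  hurwitz_group_two_branch_points_all_twos_imprimitive_general d hd hdeven γ₁ γ₂ α hγ₁ hγ₁' hγ₂ hrel
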